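/- For n ≥ 3, the dihedral group D_{2^n} of order 2^n has exactly 2^{n-1} + n cyclic subgroups and 2^n + n − 1 subgroups in total; hence cdeg(D_{2^n}) = (2^{n-1}+n)/(2^n+n−1) and lim_{n→∞} cdeg(D_{2^n}) = 1/2. -/

import Mathlib

noncomputable def cdeg (G : Type*) [Group G] : ℚ :=
  (Nat.card {H : Subgroup G // IsCyclic H} : ℚ) / (Nat.card (Subgroup G) : ℚ)

/-!
A subgroup `H` of the dihedral group `D_m` is determined by its rotations `A = {i | r i ∈ H}`
together with the set of indices `j` of its reflections `sr j`, which is empty or a coset of `A`.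
As the subgroups of `ℤ/m` correspond to the divisors of `m`, this gives `σ(m) + τ(m)` subgroups.
Such a subgroup is cyclic exactly when it has no reflections or is `{1, sr j}`, so there are
`τ(m) + m` cyclic ones. For `m = 2^(n-1)` we have `τ(m) = n` and `σ(m) = 2^n - 1`.
-/

open ArithmeticFunction Filter Subgroup Topology
open scoped ArithmeticFunction.sigma

namespace IsAddCyclic

variable {G : Type*} [AddCommGroup G] [IsAddCyclic G] [Finite G]

theorem eq_ker_nsmul_card (H : AddSubgroup G) :
    H = (nsmulAddMonoidHom (Nat.card H) : G →+ G).ker := by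
  refine AddSubgroup.eq_of_le_of_card_ge (fun x hx => ?_) ?_
  · exact congrArg Subtype.val (card_nsmul_eq_zero' (x := (⟨x, hx⟩ : H)))
  · rw [card_nsmulAddMonoidHom_ker, Nat.gcd_eq_right H.card_addSubgroup_dvd_card]

noncomputable def addSubgroupEquivDivisors : AddSubgroup G ≃ (Nat.card G).divisors where
  toFun H :=
    ⟨Nat.card H, Nat.mem_divisors.2 ⟨H.card_addSubgroup_dvd_card, Nat.card_pos.ne'⟩⟩
  invFun d := (nsmulAddMonoidHom (d : ℕ)).ker
  left_inv H := (eq_ker_nsmul_card H).symm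
  right_inv d := Subtype.ext <| by
    dsimp only
    rw [card_nsmulAddMonoidHom_ker, Nat.gcd_eq_right (Nat.dvd_of_mem_divisors d.2)]

theorem card_addSubgroup : Nat.card (AddSubgroup G) = σ 0 (Nat.card G) := by
  rw [Nat.card_congr addSubgroupEquivDivisors, sigma_zero_apply, Nat.card_eq_fintype_card,
    Fintype.card_coe]

theorem card_sigma_quotient : Nat.card (Σ H : AddSubgroup G, G ⧸ H) = σ 1 (Nat.card G) := by
  rw [Nat.card_congr (Equiv.sigmaCongrLeft addSubgroupEquivDivisors.symm).symm, Nat.card_sigma,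
    sigma_eq_sum_div, ← Finset.sum_coe_sort (Nat.card G).divisors]
  refine Finset.sum_congr rfl fun d _ => ?_
  rw [pow_one, ← AddSubgroup.index, addSubgroupEquivDivisors, Equiv.coe_fn_symm_mk,
    index_nsmulAddMonoidHom_ker, Nat.gcd_eq_right (Nat.dvd_of_mem_divisors d.2)]

end IsAddCyclic

namespace DihedralGroup

variable {n : ℕ}

def rotations (H : Subgroup (DihedralGroup n)) : AddSubgroup (ZMod n) where
  carrier := {i | r i ∈ H}
  zero_mem' := by simp [r_zero]
  add_mem' {i j} hi hj := by simpa [r_mul_r] using H.mul_mem hi hj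
  neg_mem' {i} hi := by simpa [inv_r] using H.inv_mem hi

/-- `c = none`: no reflections; `c = some (j + A)`: the reflections `sr k` with `k ∈ j + A`. -/
def ofRotations (A : AddSubgroup (ZMod n)) (c : Option (ZMod n ⧸ A)) :
    Subgroup (DihedralGroup n) where
  carrier := {x | match x with
    | r i => i ∈ A
    | sr j => c = some (j : ZMod n ⧸ A)}
  one_mem' := A.zero_mem
  mul_mem' := by
    rintro (i | i) (j | j) hi hj <;>
      simp only [Set.mem_ofPred_eq, r_mul_r, r_mul_sr, sr_mul_r, sr_mul_sr] at hi hj ⊢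
    · exact A.add_mem hi hj
    · rw [hj, Option.some_inj, QuotientAddGroup.eq_iff_sub_mem]; simpa using A.neg_mem hi
    · rw [hi, Option.some_inj, QuotientAddGroup.eq_iff_sub_mem]; simpa using hj
    · exact (QuotientAddGroup.eq_iff_sub_mem).1 (Option.some.inj (hj.symm.trans hi))
  inv_mem' := by
    rintro (i | i) hi
    · exact A.neg_mem hi
    · simpa [inv_sr] using hi

@[simp] theorem r_mem_ofRotations {A : AddSubgroup (ZMod n)} {c : Option (ZMod n ⧸ A)}
    {i : ZMod n} : r i ∈ ofRotations A c ↔ i ∈ A := Iff.rfl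

@[simp] theorem sr_mem_ofRotations {A : AddSubgroup (ZMod n)} {c : Option (ZMod n ⧸ A)}
    {j : ZMod n} : sr j ∈ ofRotations A c ↔ c = some (j : ZMod n ⧸ A) := Iff.rfl

theorem ofRotations_injective :
    Function.Injective fun p : Σ A : AddSubgroup (ZMod n), Option (ZMod n ⧸ A) =>
      ofRotations p.1 p.2 := by
  rintro ⟨A, c⟩ ⟨A', c'⟩ h
  obtain rfl : A = A' := AddSubgroup.ext fun i => by
    simpa using SetLike.ext_iff.1 h (r i)
  obtain rfl : c = c' := Option.ext fun q => by
    obtain ⟨j, rfl⟩ := QuotientAddGroup.mk_surjective q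
    simpa [eq_comm] using SetLike.ext_iff.1 h (sr j)
  rfl

theorem ofRotations_surjective :
    Function.Surjective fun p : Σ A : AddSubgroup (ZMod n), Option (ZMod n ⧸ A) =>
      ofRotations p.1 p.2 := by
  intro H
  by_cases hH : ∃ j, sr j ∈ H
  · obtain ⟨j, hj⟩ := hH
    refine ⟨⟨rotations H, some j⟩, SetLike.ext fun x => ?_⟩
    rcases x with i | k
    · rfl
    · rw [sr_mem_ofRotations, Option.some_inj, eq_comm, QuotientAddGroup.eq_iff_sub_mem,
        ← H.mul_mem_cancel_left hj, sr_mul_sr]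
      rfl
  · refine ⟨⟨rotations H, none⟩, SetLike.ext fun x => ?_⟩
    rcases x with i | k
    · rfl
    · simpa using fun h => hH ⟨k, h⟩

noncomputable def subgroupEquiv :
    (Σ A : AddSubgroup (ZMod n), Option (ZMod n ⧸ A)) ≃ Subgroup (DihedralGroup n) :=
  .ofBijective _ ⟨ofRotations_injective, ofRotations_surjective⟩

theorem zpowers_sr (j : ZMod n) : zpowers (sr j) = ofRotations ⊥ (some j) := by
  refine le_antisymm (zpowers_le.2 rfl) ?_
  rintro (i | k) h
  · rw [r_mem_ofRotations, AddSubgroup.mem_bot] at h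
    rw [h, r_zero]
    exact one_mem _
  · rw [sr_mem_ofRotations, Option.some_inj, QuotientAddGroup.eq_iff_sub_mem,
      AddSubgroup.mem_bot, sub_eq_zero] at h
    rw [← h]
    exact mem_zpowers _

theorem sr_mem_zpowers_sr {j k : ZMod n} : sr j ∈ zpowers (sr k) ↔ j = k := by
  rw [zpowers_sr, sr_mem_ofRotations, Option.some_inj, eq_comm,
    QuotientAddGroup.eq_iff_sub_mem, AddSubgroup.mem_bot, sub_eq_zero]

theorem ofRotations_none_le_zpowers_r_one (A : AddSubgroup (ZMod n)) :
    ofRotations A none ≤ zpowers (r 1) := by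
  rintro (i | k) h
  · rw [← ZMod.intCast_zmod_cast i, ← r_one_zpow]
    exact zpow_mem (mem_zpowers _) _
  · exact absurd h nofun

theorem isCyclic_subgroup_iff {H : Subgroup (DihedralGroup n)} :
    IsCyclic H ↔ (∃ A, ofRotations A none = H) ∨ ∃ j, zpowers (sr j) = H := by
  refine ⟨fun hH => ?_, ?_⟩
  · obtain ⟨g, rfl⟩ := H.isCyclic_iff_exists_zpowers_eq_top.1 hH
    rcases g with t | t
    · obtain ⟨⟨A, c⟩, hc⟩ := ofRotations_surjective (zpowers (r t))
      rcases c with _ | q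
      · exact .inl ⟨A, hc⟩
      · obtain ⟨j, rfl⟩ := QuotientAddGroup.mk_surjective q
        have hj : sr j ∈ zpowers (r t) := hc ▸ sr_mem_ofRotations.2 rfl
        have : sr j ∈ ofRotations ⊤ none := zpowers_le.2 (AddSubgroup.mem_top t) hj
        exact absurd this nofun
    · exact .inr ⟨t, rfl⟩
  · rintro (⟨A, rfl⟩ | ⟨j, rfl⟩)
    · exact isCyclic_of_le (ofRotations_none_le_zpowers_r_one A)
    · infer_instance

variable [NeZero n]

theorem card_subgroup : Nat.card (Subgroup (DihedralGroup n)) = σ 1 n + σ 0 n := by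
  rw [← Nat.card_congr subgroupEquiv,
    Nat.card_congr ((Equiv.sigmaCongrRight fun A => Equiv.optionEquivSumPUnit.{0} _).trans
      (Equiv.sigmaSumDistrib _ _)),
    Nat.card_sum, IsAddCyclic.card_sigma_quotient, Nat.card_congr (Equiv.sigmaPUnit _),
    IsAddCyclic.card_addSubgroup, Nat.card_zmod]

theorem card_cyclicSubgroup :
    Nat.card {H : Subgroup (DihedralGroup n) // IsCyclic H} = σ 0 n + n := by
  let f : AddSubgroup (ZMod n) ⊕ ZMod n → Subgroup (DihedralGroup n) :=
    Sum.elim (fun A => ofRotations A none) (fun j => zpowers (sr j))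
  have hf : f.Injective := by
    refine Function.Injective.sumElim (fun A B h =>
      congrArg Sigma.fst (ofRotations_injective (a₁ := ⟨A, none⟩) (a₂ := ⟨B, none⟩) h))
      (fun j k (h : zpowers (sr j) = zpowers (sr k)) =>
        sr_mem_zpowers_sr.1 (h ▸ mem_zpowers (sr j))) fun A j h => ?_
    have : sr j ∈ ofRotations A none := h ▸ mem_zpowers (sr j)
    exact absurd this nofun
  have hrange : Set.range f = {H : Subgroup (DihedralGroup n) | IsCyclic H} := by
    ext H
    rw [Set.mem_ofPred_eq, isCyclic_subgroup_iff]
    simp only [f, Set.mem_range, Sum.exists, Sum.elim_inl, Sum.elim_inr]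
  rw [← Set.coe_ofPred, ← hrange, Nat.card_range_of_injective hf, Nat.card_sum,
    IsAddCyclic.card_addSubgroup, Nat.card_zmod]

theorem card_subgroup_two_pow (k : ℕ) :
    Nat.card (Subgroup (DihedralGroup (2 ^ k))) = 2 ^ (k + 1) + k := by
  rw [card_subgroup, sigma_one_apply_prime_pow Nat.prime_two, Nat.geomSum_eq le_rfl,
    Nat.div_one, sigma_zero_apply_prime_pow Nat.prime_two]
  have := Nat.one_le_two_pow (n := k + 1)
  omega

theorem card_cyclicSubgroup_two_pow (k : ℕ) :
    Nat.card {H : Subgroup (DihedralGroup (2 ^ k)) // IsCyclic H} = 2 ^ k + k + 1 := by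
  rw [card_cyclicSubgroup, sigma_zero_apply_prime_pow Nat.prime_two]
  omega

end DihedralGroup

theorem tendsto_two_pow_ratio :
    Tendsto (fun n : ℕ => ((2 ^ (n - 1) + n : ℕ) : ℚ) / ((2 ^ n + n - 1 : ℕ) : ℚ)) atTop
      (𝓝 (1 / 2)) := by
  rw [Rat.isUniformEmbedding_coe_real.isEmbedding.tendsto_nhds_iff]
  have hn : Tendsto (fun n : ℕ => (n : ℝ) / 2 ^ n) atTop (𝓝 0) := by
    simpa using tendsto_pow_const_div_const_pow_of_one_lt 1 one_lt_two
  have hinv : Tendsto (fun n : ℕ => ((2 : ℝ) ^ n)⁻¹) atTop (𝓝 0) :=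
    tendsto_inv_atTop_zero.comp (tendsto_pow_atTop_atTop_of_one_lt one_lt_two)
  have hlim := (tendsto_const_nhds (x := (1 / 2 : ℝ)) |>.add hn).div
    ((tendsto_const_nhds (x := (1 : ℝ))).add hn |>.sub hinv) (by norm_num)
  rw [add_zero, add_zero, sub_zero, div_one] at hlim
  refine (hlim.congr' ?_).trans_eq ?_
  · filter_upwards [eventually_ge_atTop 1] with n hn
    obtain ⟨m, rfl⟩ := Nat.exists_eq_add_of_le' hn
    have h1 : 1 ≤ 2 ^ (m + 1) + (m + 1) := Nat.le_add_left _ _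
    simp only [Pi.div_apply, Function.comp_apply, Nat.add_sub_cancel]
    push_cast [Nat.cast_sub h1]
    field_simp
    ring
  · norm_num

theorem cdeg_dihedral_two_power :
    (∀ n : ℕ, 3 ≤ n →
      Nat.card {H : Subgroup (DihedralGroup (2 ^ (n - 1))) // IsCyclic H} = 2 ^ (n - 1) + n ∧
      Nat.card (Subgroup (DihedralGroup (2 ^ (n - 1)))) = 2 ^ n + n - 1 ∧
      cdeg (DihedralGroup (2 ^ (n - 1))) =
        ((2 ^ (n - 1) + n : ℕ) : ℚ) / ((2 ^ n + n - 1 : ℕ) : ℚ)) ∧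
    Filter.Tendsto (fun n : ℕ => cdeg (DihedralGroup (2 ^ (n - 1))))
      Filter.atTop (nhds (1 / 2)) := by
  have counts : ∀ n : ℕ, 1 ≤ n →
      Nat.card {H : Subgroup (DihedralGroup (2 ^ (n - 1))) // IsCyclic H} = 2 ^ (n - 1) + n ∧
      Nat.card (Subgroup (DihedralGroup (2 ^ (n - 1)))) = 2 ^ n + n - 1 := by
    intro n hn
    obtain ⟨k, rfl⟩ := Nat.exists_eq_add_of_le' hn
    rw [Nat.add_sub_cancel, DihedralGroup.card_cyclicSubgroup_two_pow,
      DihedralGroup.card_subgroup_two_pow]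
    exact ⟨by ring, (Nat.add_succ_sub_one _ _).symm⟩
  have formula : ∀ n : ℕ, 1 ≤ n → cdeg (DihedralGroup (2 ^ (n - 1))) =
      ((2 ^ (n - 1) + n : ℕ) : ℚ) / ((2 ^ n + n - 1 : ℕ) : ℚ) := fun n hn => by
    rw [cdeg, (counts n hn).1, (counts n hn).2]
  refine ⟨fun n hn =>
    ⟨(counts n (by omega)).1, (counts n (by omega)).2, formula n (by omega)⟩, ?_⟩
  exact tendsto_two_pow_ratio.congr' (eventually_atTop.2 ⟨1, fun n hn => (formula n hn).symm⟩)
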